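/- arXiv:2401.07168 — 7 statements merged into one kernel-verified Lean document; each statement's English description precedes it below -/
import Mathlib

section
/- Let Δ₁, …, Δₘ be topological spaces and fᵢ : Δᵢ → [0,∞) functions such that every upper level set {x : fᵢ(x) ≥ t} is connected. Equip Δ = Δ₁ × ⋯ × Δₘ with the product topology. Then the function f(x₁,…,xₘ) = f₁(x₁)⋯fₘ(xₘ) has all upper level sets connected. -/
private lemma two_factor {X Y : Type*} [TopologicalSpace X] [TopologicalSpace Y]
    (f : X → ℝ) (g : Y → ℝ) (hfn : ∀ x, 0 ≤ f x) (hgn : ∀ y, 0 ≤ g y)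
    (hf : ∀ t : ℝ, IsPreconnected {x | t ≤ f x})
    (hg : ∀ t : ℝ, IsPreconnected {y | t ≤ g y}) (t : ℝ) :
    IsPreconnected {p : X × Y | t ≤ f p.1 * g p.2} := by
  rcases le_or_gt t 0 with ht | ht
  · have hs : {p : X × Y | t ≤ f p.1 * g p.2} = (Set.univ : Set X) ×ˢ (Set.univ : Set Y) := by
      rw [Set.univ_prod_univ]
      exact Set.eq_univ_of_forall fun p => ht.trans (mul_nonneg (hfn _) (hgn _))
    have hXu : IsPreconnected (Set.univ : Set X) := by
      have h : {x | t ≤ f x} = Set.univ := Set.eq_univ_of_forall fun x => ht.trans (hfn x)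
      simpa [h] using hf t
    have hYu : IsPreconnected (Set.univ : Set Y) := by
      have h : {y | t ≤ g y} = Set.univ := Set.eq_univ_of_forall fun y => ht.trans (hgn y)
      simpa [h] using hg t
    rw [hs]; exact hXu.prod hYu
  · apply isPreconnected_of_forall_pair
    rintro ⟨a, b⟩ hp ⟨c, d⟩ hq
    simp only [Set.mem_setOf_eq] at hp hq
    set A : Set X := {x | min (f a) (f c) ≤ f x} with hA
    set B : Set Y := {y | min (g b) (g d) ≤ g y} with hB
    have haA : a ∈ A := by simp [hA, min_le_left]
    have hcA : c ∈ A := by simp [hA, min_le_right]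
    have hbB : b ∈ B := by simp [hB, min_le_left]
    have hdB : d ∈ B := by simp [hB, min_le_right]
    rcases le_total (f a) (f c) with hac | hca
    · -- path (a,b) → (c,b) → (c,d)
      refine ⟨A ×ˢ {b} ∪ {c} ×ˢ B, ?_, Or.inl ⟨haA, rfl⟩, Or.inr ⟨rfl, hdB⟩, ?_⟩
      · rintro ⟨x, y⟩ (⟨hx, hy⟩ | ⟨hx, hy⟩)
        · simp only [Set.mem_singleton_iff] at hy
          rw [hy]
          have : f a ≤ f x := (min_eq_left hac ▸ hx)
          exact le_trans hp (mul_le_mul_of_nonneg_right this (hgn b))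
        · simp only [Set.mem_singleton_iff] at hx
          rw [hx]
          have h1 : t ≤ f c * g b := le_trans hp (mul_le_mul_of_nonneg_right hac (hgn b))
          have h2 : t ≤ f c * min (g b) (g d) := by
            rcases min_cases (g b) (g d) with ⟨h, _⟩ | ⟨h, _⟩ <;> rw [h]
            exacts [h1, hq]
          exact le_trans h2 (mul_le_mul_of_nonneg_left hy (hfn c))
      · exact IsPreconnected.union (c, b) ⟨hcA, rfl⟩ ⟨rfl, hbB⟩
          ((hf _).prod isPreconnected_singleton) (isPreconnected_singleton.prod (hg _))
    · -- path (a,b) → (a,d) → (c,d)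
      refine ⟨{a} ×ˢ B ∪ A ×ˢ {d}, ?_, Or.inl ⟨rfl, hbB⟩, Or.inr ⟨hcA, rfl⟩, ?_⟩
      · rintro ⟨x, y⟩ (⟨hx, hy⟩ | ⟨hx, hy⟩)
        · simp only [Set.mem_singleton_iff] at hx
          rw [hx]
          have h1 : t ≤ f a * g d := le_trans hq (mul_le_mul_of_nonneg_right hca (hgn d))
          have h2 : t ≤ f a * min (g b) (g d) := by
            rcases min_cases (g b) (g d) with ⟨h, _⟩ | ⟨h, _⟩ <;> rw [h]
            exacts [hp, h1]
          exact le_trans h2 (mul_le_mul_of_nonneg_left hy (hfn a))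
        · simp only [Set.mem_singleton_iff] at hy
          rw [hy]
          have : f c ≤ f x := (min_eq_right hca ▸ hx)
          exact le_trans hq (mul_le_mul_of_nonneg_right this (hgn d))
      · exact IsPreconnected.union (a, d) ⟨rfl, hdB⟩ ⟨haA, rfl⟩
          (isPreconnected_singleton.prod (hg _)) ((hf _).prod isPreconnected_singleton)

/-- a product of nonnegative island-free functions is island-free. -/
theorem stmt1 {m : ℕ} (Δ : Fin m → Type*) [∀ i, TopologicalSpace (Δ i)]
    (f : ∀ i, Δ i → ℝ) (hnn : ∀ i x, 0 ≤ f i x)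
    (hif : ∀ i (t : ℝ), IsPreconnected {x : Δ i | t ≤ f i x}) (t : ℝ) :
    IsPreconnected {x : (∀ i, Δ i) | t ≤ ∏ i, f i (x i)} := by
  revert t
  induction m with
  | zero =>
    intro t
    apply Set.Subsingleton.isPreconnected
    intro x _ y _
    exact Subsingleton.elim x y
  | succ n ih =>
    intro t
    -- φ : Δ 0 × (∀ i : Fin n, Δ i.succ) → ∀ i, Δ i
    set φ : Δ 0 × (∀ i : Fin n, Δ i.succ) → (∀ i, Δ i) :=
      fun p => Fin.cons p.1 p.2 with hφ
    have hφc : Continuous φ := by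
      apply continuous_pi
      intro i
      induction i using Fin.cases with
      | zero => simpa [hφ] using continuous_fst
      | succ j =>
        simp only [hφ, Fin.cons_succ]
        exact (continuous_apply j).comp continuous_snd
    have hgnn : ∀ p : ∀ i : Fin n, Δ i.succ, 0 ≤ ∏ i, f i.succ (p i) :=
      fun p => Finset.prod_nonneg fun i _ => hnn _ _
    have hpre : IsPreconnected {p : Δ 0 × (∀ i : Fin n, Δ i.succ) |
        t ≤ f 0 p.1 * ∏ i, f i.succ (p.2 i)} :=
      two_factor (f 0) (fun (z : ∀ i : Fin n, Δ i.succ) => ∏ i : Fin n, f i.succ (z i)) (hnn 0) hgnn (hif 0)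
        (ih (fun i => Δ i.succ) (fun i => f i.succ) (fun i x => hnn _ _)
          (fun i s => hif _ s)) t
    have himg : {x : (∀ i, Δ i) | t ≤ ∏ i, f i (x i)} =
        φ '' {p | t ≤ f 0 p.1 * ∏ i, f i.succ (p.2 i)} := by
      ext x
      simp only [Set.mem_setOf_eq, Set.mem_image]
      constructor
      · intro hx
        refine ⟨(x 0, fun i => x i.succ), ?_, ?_⟩
        · simpa [Fin.prod_univ_succ] using hx
        · simp [hφ]
          exact funext fun i => by
            induction i using Fin.cases with
            | zero => simp
            | succ j => simp
      · rintro ⟨p, hp, rfl⟩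
        simpa [hφ, Fin.prod_univ_succ] using hp
    rw [himg]
    exact hpre.image φ hφc.continuousOn
end

section
/- Let Δ be a compact metric space and f : Δ → ℝ continuous and island-free (all upper level sets connected). Then the set M of global maximisers of f is non-empty, compact, and connected. Moreover, if E ⊆ Δ is a non-empty compact set with M ∩ (Δ \ E) ≠ ∅, then the set of maximisers of f restricted to E intersects the topological boundary of E (relative to Δ). -/
/-- maximisers of a continuous island-free function on a compact
metric space form a nonempty compact connected set; constrained maximisers meet
the boundary if a global maximiser lies outside the constraint set. -/
theorem stmt2 {Δ : Type*} [MetricSpace Δ] [CompactSpace Δ] [Nonempty Δ]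
    (f : Δ → ℝ) (hf : Continuous f)
    (hif : ∀ t : ℝ, IsPreconnected {x : Δ | t ≤ f x}) :
    ({x : Δ | ∀ y, f y ≤ f x}.Nonempty ∧ IsCompact {x : Δ | ∀ y, f y ≤ f x} ∧
      IsConnected {x : Δ | ∀ y, f y ≤ f x}) ∧
    ∀ E : Set Δ, E.Nonempty → IsCompact E →
      ({x : Δ | ∀ y, f y ≤ f x} ∩ Eᶜ).Nonempty →
      ({x ∈ E | ∀ y ∈ E, f y ≤ f x} ∩ frontier E).Nonempty := by
  obtain ⟨x₀, -, hx₀'⟩ := isCompact_univ.exists_isMaxOn Set.univ_nonempty hf.continuousOn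
  have hx₀ : ∀ y, f y ≤ f x₀ := fun y => hx₀' (Set.mem_univ y)
  have hM : {x : Δ | ∀ y, f y ≤ f x} = {x : Δ | f x₀ ≤ f x} := by
    ext x
    constructor
    · exact fun h => h x₀
    · exact fun h y => le_trans (hx₀ y) h
  have hclosed : IsClosed {x : Δ | ∀ y, f y ≤ f x} := by
    rw [hM]; exact isClosed_le continuous_const hf
  refine ⟨⟨⟨x₀, fun y => hx₀ y⟩, hclosed.isCompact,
    ⟨⟨x₀, fun y => hx₀ y⟩, by rw [hM]; exact hif (f x₀)⟩⟩, ?_⟩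
  intro E hEne hEc hout
  by_contra hempty
  rw [Set.not_nonempty_iff_eq_empty] at hempty
  obtain ⟨x₁, hx₁E, hx₁⟩ := hEc.exists_isMaxOn hEne hf.continuousOn
  obtain ⟨z, hzM, hzE⟩ := hout
  have hEclosed : IsClosed E := hEc.isClosed
  set L := {x : Δ | f x₁ ≤ f x}
  have hLsub : L ⊆ Eᶜ ∪ interior E := by
    intro x hx
    by_cases hxE : x ∈ E
    · right
      have hmax : x ∈ {x ∈ E | ∀ y ∈ E, f y ≤ f x} :=
        ⟨hxE, fun y hy => le_trans (hx₁ hy) hx⟩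
      have hnf : x ∉ frontier E := fun hfr => by
        have : x ∈ ({x ∈ E | ∀ y ∈ E, f y ≤ f x} ∩ frontier E) := ⟨hmax, hfr⟩
        rw [hempty] at this; exact this
      rw [hEclosed.frontier_eq, Set.mem_diff, not_and, not_not] at hnf
      exact hnf hxE
    · exact Or.inl hxE
  have hzL : z ∈ L := le_trans (hx₁ hx₁E) (hzM x₁)
  have hx₁L : x₁ ∈ L := le_refl (f x₁)
  have hx₁int : x₁ ∈ interior E := by
    have := hLsub hx₁L
    rcases this with h | h
    · exact absurd hx₁E h
    · exact h
  obtain ⟨w, hwL, hwC, hwI⟩ := hif (f x₁) Eᶜ (interior E) hEclosed.isOpen_compl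
    isOpen_interior hLsub ⟨z, hzL, hzE⟩ ⟨x₁, hx₁L, hx₁int⟩
  exact hwC (interior_subset hwI)
end

section
/- Let I be a finite index set and η : I → J a surjection onto a finite set J. For a probability vector w = (w_i)_{i∈I}, let η(w) = (∑_{i∈η⁻¹(j)} w_i)_{j∈J} be the pushforward probability vector. Then the function w ↦ H(w) − H(η(w)), where H denotes Shannon entropy H(w) = ∑ w_i log(1/w_i), is concave on the simplex of probability vectors on I. -/
open Real Finset

/-- Two-point log-sum inequality. -/
lemma logsum_two (u v p q : ℝ) (hu : 0 ≤ u) (hv : 0 ≤ v) (hup : u ≤ p) (hvq : v ≤ q) :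
    (u + v) * Real.log ((u + v) / (p + q)) ≤ u * Real.log (u / p) + v * Real.log (v / q) := by
  rcases hu.eq_or_lt with rfl | hu'
  · simp only [zero_add, zero_mul, zero_div]
    rcases hv.eq_or_lt with rfl | hv'
    · simp
    · have hq : 0 < q := lt_of_lt_of_le hv' hvq
      have hp : 0 ≤ p := le_trans le_rfl hup
      have h1 : v / (p + q) ≤ v / q := by
        apply div_le_div_of_nonneg_left hv hq; linarith
      have h2 : 0 < v / (p + q) := by positivity
      have := Real.log_le_log h2 h1
      nlinarith [this, hv'.le]
  · rcases hv.eq_or_lt with rfl | hv'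
    · simp only [add_zero, zero_mul, zero_div]
      have hp : 0 < p := lt_of_lt_of_le hu' hup
      have hq : 0 ≤ q := le_trans le_rfl hvq
      have h1 : u / (p + q) ≤ u / p := by
        apply div_le_div_of_nonneg_left hu hp; linarith
      have h2 : 0 < u / (p + q) := by positivity
      have := Real.log_le_log h2 h1
      nlinarith [this, hu'.le]
    · have hp : 0 < p := lt_of_lt_of_le hu' hup
      have hq : 0 < q := lt_of_lt_of_le hv' hvq
      have hpq : 0 < p + q := by linarith
      have huv : 0 < u + v := by linarith
      have L := Real.log ((u + v) / (p + q))
      -- first piece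
      have e1 : Real.log (u * (p + q) / (p * (u + v))) =
          Real.log (u / p) - Real.log ((u + v) / (p + q)) := by
        rw [show u * (p + q) / (p * (u + v)) = (u / p) / ((u + v) / (p + q)) by
          field_simp; try ring]
        rw [Real.log_div (by positivity) (by positivity)]
      have k1 : 1 - p * (u + v) / (u * (p + q)) ≤
          Real.log (u / p) - Real.log ((u + v) / (p + q)) := by
        rw [← e1]
        have ht : 0 < u * (p + q) / (p * (u + v)) := by positivity
        have := Real.one_sub_inv_le_log_of_pos ht
        rwa [show (u * (p + q) / (p * (u + v)))⁻¹ = p * (u + v) / (u * (p + q)) by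
          rw [inv_div]] at this
      have e2 : Real.log (v * (p + q) / (q * (u + v))) =
          Real.log (v / q) - Real.log ((u + v) / (p + q)) := by
        rw [show v * (p + q) / (q * (u + v)) = (v / q) / ((u + v) / (p + q)) by
          field_simp; try ring]
        rw [Real.log_div (by positivity) (by positivity)]
      have k2 : 1 - q * (u + v) / (v * (p + q)) ≤
          Real.log (v / q) - Real.log ((u + v) / (p + q)) := by
        rw [← e2]
        have ht : 0 < v * (p + q) / (q * (u + v)) := by positivity
        have := Real.one_sub_inv_le_log_of_pos ht
        rwa [show (v * (p + q) / (q * (u + v)))⁻¹ = q * (u + v) / (v * (p + q)) by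
          rw [inv_div]] at this
      have m1 : u * (1 - p * (u + v) / (u * (p + q))) ≤
          u * (Real.log (u / p) - Real.log ((u + v) / (p + q))) :=
        mul_le_mul_of_nonneg_left k1 hu
      have m2 : v * (1 - q * (u + v) / (v * (p + q))) ≤
          v * (Real.log (v / q) - Real.log ((u + v) / (p + q))) :=
        mul_le_mul_of_nonneg_left k2 hv
      have id1 : u * (1 - p * (u + v) / (u * (p + q))) = u - p * (u + v) / (p + q) := by
        field_simp
      have id2 : v * (1 - q * (u + v) / (v * (p + q))) = v - q * (u + v) / (p + q) := by
        field_simp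
      have id3 : p * (u + v) / (p + q) + q * (u + v) / (p + q) = u + v := by
        field_simp
      nlinarith [m1, m2]

/-- Scaling identity for `x * log (x / s)`. -/
lemma scale_mul_log (a x s : ℝ) (ha : 0 ≤ a) :
    a * (x * Real.log (x / s)) = (a * x) * Real.log ((a * x) / (a * s)) := by
  rcases ha.eq_or_lt with rfl | ha'
  · simp
  · rw [mul_div_mul_left _ _ (ne_of_gt ha')]
    ring

/-- Per-term identity: `-(x * log (x / s)) = negMulLog x + x * log s` for `0 ≤ x`, `s ≠ 0`. -/
lemma term_id (x s : ℝ) (hx : 0 ≤ x) (hs : s ≠ 0) :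
    -(x * Real.log (x / s)) = Real.negMulLog x + x * Real.log s := by
  rcases hx.eq_or_lt with rfl | hx'
  · simp
  · rw [Real.log_div (ne_of_gt hx') hs, Real.negMulLog]
    ring

/-- Fiberwise decomposition of the entropy difference. -/
lemma fiber_decomp {I J : Type*} [Fintype I] [Fintype J] [DecidableEq J]
    (η : I → J) (w : I → ℝ) (hw : ∀ i, 0 ≤ w i) :
    (∑ i, Real.negMulLog (w i)) -
        ∑ j, Real.negMulLog (∑ i ∈ Finset.univ.filter (fun i => η i = j), w i) =
      ∑ j, ∑ i ∈ Finset.univ.filter (fun i => η i = j),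
        -(w i * Real.log (w i / ∑ i' ∈ Finset.univ.filter (fun i => η i = j), w i')) := by
  rw [← Finset.sum_fiberwise Finset.univ η (fun i => Real.negMulLog (w i)),
    ← Finset.sum_sub_distrib]
  refine Finset.sum_congr rfl fun j _ => ?_
  set S := ∑ i' ∈ Finset.univ.filter (fun i => η i = j), w i' with hS
  by_cases h0 : S = 0
  · have hz : ∀ i ∈ Finset.univ.filter (fun i => η i = j), w i = 0 := by
      intro i hi
      have := (Finset.sum_eq_zero_iff_of_nonneg (fun i _ => hw i)).mp h0
      exact this i hi
    have h1 : ∑ i ∈ Finset.univ.filter (fun i => η i = j), Real.negMulLog (w i) = 0 :=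
      Finset.sum_eq_zero fun i hi => by rw [hz i hi]; simp
    have h2 : ∑ i ∈ Finset.univ.filter (fun i => η i = j),
        -(w i * Real.log (w i / S)) = 0 :=
      Finset.sum_eq_zero fun i hi => by rw [hz i hi]; simp
    rw [h1, h2, h0]
    simp
  · rw [Finset.sum_congr rfl fun i hi => term_id (w i) S (hw i) h0,
      Finset.sum_add_distrib, ← Finset.sum_mul, ← hS, Real.negMulLog]
    ring

/-- w ↦ H(w) - H(η(w)) is concave on the simplex. -/
theorem stmt3 {I J : Type*} [Fintype I] [Fintype J] [DecidableEq J]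
    (η : I → J) (hη : Function.Surjective η) :
    ConcaveOn ℝ (stdSimplex ℝ I)
      (fun w => (∑ i, Real.negMulLog (w i)) -
        ∑ j, Real.negMulLog (∑ i ∈ Finset.univ.filter (fun i => η i = j), w i)) := by
  refine ⟨convex_stdSimplex ℝ I, ?_⟩
  intro p hp q hq a b ha hb hab
  have hp0 : ∀ i, 0 ≤ p i := hp.1
  have hq0 : ∀ i, 0 ≤ q i := hq.1
  have hw0 : ∀ i, 0 ≤ a * p i + b * q i := fun i =>
    add_nonneg (mul_nonneg ha (hp0 i)) (mul_nonneg hb (hq0 i))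
  have happ : ∀ i, (a • p + b • q) i = a * p i + b * q i := fun i => by
    simp [Pi.add_apply, Pi.smul_apply, smul_eq_mul]
  simp only [happ]
  rw [fiber_decomp η _ hw0, fiber_decomp η p hp0, fiber_decomp η q hq0]
  simp only [smul_eq_mul, Finset.mul_sum]
  rw [← Finset.sum_add_distrib]
  refine Finset.sum_le_sum fun j _ => ?_
  rw [← Finset.sum_add_distrib]
  refine Finset.sum_le_sum fun i hi => ?_
  set P := ∑ i' ∈ Finset.univ.filter (fun i => η i = j), p i' with hP
  set Q := ∑ i' ∈ Finset.univ.filter (fun i => η i = j), q i' with hQ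
  have hsum : ∑ i' ∈ Finset.univ.filter (fun i => η i = j), (a * p i' + b * q i')
      = a * P + b * Q := by
    rw [Finset.sum_add_distrib, ← Finset.mul_sum, ← Finset.mul_sum]
  rw [hsum]
  have hiP : p i ≤ P := Finset.single_le_sum (fun i' _ => hp0 i') hi
  have hiQ : q i ≤ Q := Finset.single_le_sum (fun i' _ => hq0 i') hi
  have key := logsum_two (a * p i) (b * q i) (a * P) (b * Q)
    (mul_nonneg ha (hp0 i)) (mul_nonneg hb (hq0 i))
    (mul_le_mul_of_nonneg_left hiP ha) (mul_le_mul_of_nonneg_left hiQ hb)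
  rw [← scale_mul_log a (p i) P ha, ← scale_mul_log b (q i) Q hb] at key
  linarith
end

section
/- Let Δ be a compact metric space, u, v : Δ → ℝ continuous, T(t) = min_{w∈Δ}(t·u(w) − v(w)), M(t) its set of minimisers, and F(α) = max{v(w) : w ∈ Δ, u(w) = α} (with F(α) = −∞ if no such w exists). If M(t) is connected for some t ∈ ℝ, then u(M(t)) equals the subdifferential interval ∂T(t) = [∂⁺T(t), ∂⁻T(t)], and F(α) = T*(α) for all α ∈ ∂T(t), where T* is the concave conjugate of T. -/
/-- if the set of minimisers M(t) is connected then u(M(t)) = ∂T(t)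
and F = T* on ∂T(t). -/
theorem stmt7 {Δ : Type*} [MetricSpace Δ] [CompactSpace Δ] [Nonempty Δ]
    (u v : Δ → ℝ) (hu : Continuous u) (hv : Continuous v)
    (T : ℝ → ℝ) (hT : ∀ t, T t = ⨅ w : Δ, (t * u w - v w))
    (t : ℝ) (hconn : IsConnected {w : Δ | t * u w - v w = T t}) :
    u '' {w : Δ | t * u w - v w = T t} =
      Set.Icc (derivWithin T (Set.Ici t) t) (derivWithin T (Set.Iic t) t) ∧
    ∀ α ∈ Set.Icc (derivWithin T (Set.Ici t) t) (derivWithin T (Set.Iic t) t),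
      sSup (v '' {w : Δ | u w = α}) = ⨅ s : ℝ, (s * α - T s) := by
  -- bound on |u|
  obtain ⟨wC, -, hwC'⟩ := isCompact_univ.exists_isMaxOn Set.univ_nonempty
    hu.abs.continuousOn
  have hwC : ∀ w, |u w| ≤ |u wC| := fun w => hwC' (Set.mem_univ w)
  set C : ℝ := |u wC| with hCdef
  have hC : ∀ w, |u w| ≤ C := fun w => hwC w
  have hC0 : 0 ≤ C := (abs_nonneg _).trans (hC wC)
  -- existence of minimisers and basic inequality
  have key : ∀ s : ℝ, ∃ w : Δ, (T s = s * u w - v w) ∧ ∀ w', T s ≤ s * u w' - v w' := by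
    intro s
    obtain ⟨w, -, hw'⟩ := isCompact_univ.exists_isMinOn Set.univ_nonempty
      ((continuous_const.mul hu).sub hv).continuousOn
    have hw : ∀ w', s * u w - v w ≤ s * u w' - v w' := fun w' => hw' (Set.mem_univ w')
    have hb : BddBelow (Set.range fun w' : Δ => s * u w' - v w') :=
      ⟨s * u w - v w, Set.forall_mem_range.2 fun w' => hw w'⟩
    have h1 : ∀ w', T s ≤ s * u w' - v w' := fun w' => (hT s) ▸ ciInf_le hb w'
    exact ⟨w, le_antisymm (h1 w) ((hT s) ▸ le_ciInf fun w' => hw w'), h1⟩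
  have hle : ∀ s (w : Δ), T s ≤ s * u w - v w := fun s w => (key s).choose_spec.2 w
  set M : Set Δ := {w : Δ | t * u w - v w = T t} with hMdef
  have hMne : M.Nonempty := hconn.nonempty
  have hMc : IsCompact M :=
    (isClosed_eq ((continuous_const.mul hu).sub hv) continuous_const).isCompact
  have hKc : IsCompact (u '' M) := hMc.image hu
  have hKne : (u '' M).Nonempty := hMne.image u
  set a : ℝ := sInf (u '' M) with hadef
  set b : ℝ := sSup (u '' M) with hbdef
  have haM : a ∈ u '' M := hKc.sInf_mem hKne
  have hbM : b ∈ u '' M := hKc.sSup_mem hKne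
  have hab : ∀ x ∈ u '' M, a ≤ x ∧ x ≤ b := fun x hx =>
    ⟨csInf_le hKc.bddBelow hx, le_csSup hKc.bddAbove hx⟩
  -- localization of minimisers near t
  have claimA : ∀ O : Set Δ, IsOpen O → M ⊆ O →
      ∀ᶠ s in nhds t, ∀ w, s * u w - v w = T s → w ∈ O := by
    intro O hO hMO
    by_cases hne : Oᶜ.Nonempty
    · have hKcc : IsCompact Oᶜ := hO.isClosed_compl.isCompact
      obtain ⟨w0, hw0K, hw0min'⟩ := hKcc.exists_isMinOn hne
        ((continuous_const.mul hu).sub hv).continuousOn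
      have hw0min : ∀ w ∈ Oᶜ, t * u w0 - v w0 ≤ t * u w - v w := fun w hw => hw0min' hw
      set ε : ℝ := (t * u w0 - v w0) - T t with hεdef
      have hεpos : 0 < ε := by
        have hne' : t * u w0 - v w0 ≠ T t := fun h => hw0K (hMO h)
        have := hle t w0
        rcases lt_or_eq_of_le this with h | h
        · simpa [hεdef] using h
        · exact absurd h.symm hne'
      have hδpos : 0 < ε / (2 * (C + 1)) := by positivity
      refine Metric.eventually_nhds_iff.2 ⟨ε / (2 * (C + 1)), hδpos, ?_⟩
      intro s hs w hw
      by_contra hwO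
      have hwK : w ∈ Oᶜ := hwO
      rw [Real.dist_eq] at hs
      obtain ⟨wt, hwt, -⟩ := key t
      -- T s ≤ T t + |s-t| * C
      have b1 : (s - t) * u wt ≤ |s - t| * C := by
        calc (s - t) * u wt ≤ |(s - t) * u wt| := le_abs_self _
        _ = |s - t| * |u wt| := abs_mul _ _
        _ ≤ |s - t| * C := mul_le_mul_of_nonneg_left (hC wt) (abs_nonneg _)
      have e1 : T s ≤ T t + |s - t| * C := by
        have := hle s wt
        have h2 : T t = t * u wt - v wt := hwt
        nlinarith [b1]
      -- s * u w - v w ≥ T t + ε - |s-t| * C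
      have b2 : -(|s - t| * C) ≤ (s - t) * u w := by
        have : |(s - t) * u w| ≤ |s - t| * C := by
          rw [abs_mul]; exact mul_le_mul_of_nonneg_left (hC w) (abs_nonneg _)
        have := neg_abs_le ((s - t) * u w)
        linarith
      have e2 : T t + ε ≤ t * u w - v w := by
        have := hw0min w hwK
        simp only [hεdef]; linarith
      have e3 : T t + ε - |s - t| * C ≤ s * u w - v w := by nlinarith [b2]
      have hC1 : |s - t| * C ≤ ε / (2 * (C + 1)) * C :=
        mul_le_mul_of_nonneg_right (le_of_lt hs) hC0
      have : ε / (2 * (C + 1)) * C < ε / 2 := by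
        rw [div_mul_eq_mul_div, div_lt_iff₀ (by positivity)]
        nlinarith
      rw [hw] at e3
      linarith
    · have hO' : O = Set.univ := by
        rwa [Set.not_nonempty_iff_eq_empty, Set.compl_empty_iff] at hne
      filter_upwards with s w _
      simp [hO']
  -- upper bound on slope on the right / lower on the left
  obtain ⟨wa, hwaM, hwa⟩ := id haM
  obtain ⟨wb, hwbM, hwb⟩ := id hbM
  -- right derivative
  have hdR : HasDerivWithinAt T a (Set.Ici t) t := by
    rw [hasDerivWithinAt_iff_tendsto_slope, Set.Ici_sdiff_left]
    rw [tendsto_order]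
    constructor
    · intro c hc
      have hO : IsOpen {w : Δ | c < u w} := isOpen_lt continuous_const hu
      have hMO : M ⊆ {w : Δ | c < u w} := fun w hw =>
        lt_of_lt_of_le hc (hab _ ⟨w, hw, rfl⟩).1
      filter_upwards [(claimA _ hO hMO).filter_mono nhdsWithin_le_nhds,
        self_mem_nhdsWithin] with s hPs hs
      obtain ⟨hws, -⟩ := (key s).choose_spec
      have hcws : c < u (key s).choose := hPs _ hws.symm
      have h1 : T t ≤ t * u (key s).choose - v (key s).choose := hle t _
      rw [slope_def_field, lt_div_iff₀ (sub_pos.2 hs)]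
      nlinarith [sub_pos.2 (Set.mem_Ioi.mp hs)]
    · intro c hc
      filter_upwards [self_mem_nhdsWithin] with s hs
      have h1 : T s ≤ s * u wa - v wa := hle s wa
      have h2 : t * u wa - v wa = T t := hwaM
      rw [slope_def_field, div_lt_iff₀ (sub_pos.2 hs)]
      rw [hwa] at h1 h2
      nlinarith [sub_pos.2 (Set.mem_Ioi.mp hs)]
  -- left derivative
  have hdL : HasDerivWithinAt T b (Set.Iic t) t := by
    rw [hasDerivWithinAt_iff_tendsto_slope, Set.Iic_diff_right]
    rw [tendsto_order]
    constructor
    · intro c hc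
      filter_upwards [self_mem_nhdsWithin] with s hs
      have h1 : T s ≤ s * u wb - v wb := hle s wb
      have h2 : t * u wb - v wb = T t := hwbM
      rw [slope_def_field, lt_div_iff_of_neg (sub_neg.2 (Set.mem_Iio.mp hs))]
      rw [hwb] at h1 h2
      nlinarith [sub_neg.2 (Set.mem_Iio.mp hs)]
    · intro c hc
      have hO : IsOpen {w : Δ | u w < c} := isOpen_lt hu continuous_const
      have hMO : M ⊆ {w : Δ | u w < c} := fun w hw =>
        lt_of_le_of_lt (hab _ ⟨w, hw, rfl⟩).2 hc
      filter_upwards [(claimA _ hO hMO).filter_mono nhdsWithin_le_nhds,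
        self_mem_nhdsWithin] with s hPs hs
      obtain ⟨hws, -⟩ := (key s).choose_spec
      have hcws : u (key s).choose < c := hPs _ hws.symm
      have h1 : T t ≤ t * u (key s).choose - v (key s).choose := hle t _
      rw [slope_def_field, div_lt_iff_of_neg (sub_neg.2 (Set.mem_Iio.mp hs))]
      nlinarith [sub_neg.2 (Set.mem_Iio.mp hs)]
  have hda : derivWithin T (Set.Ici t) t = a :=
    hdR.derivWithin (uniqueDiffOn_Ici t t Set.self_mem_Ici)
  have hdb : derivWithin T (Set.Iic t) t = b :=
    hdL.derivWithin (uniqueDiffOn_Iic t t Set.self_mem_Iic)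
  -- part 1
  have part1 : u '' M = Set.Icc a b := by
    apply Set.Subset.antisymm
    · intro x hx
      exact ⟨(hab x hx).1, (hab x hx).2⟩
    · exact ((hconn.image u hu.continuousOn).isPreconnected.ordConnected).out haM hbM
  refine ⟨by rw [hda, hdb]; exact part1, ?_⟩
  intro α hα
  rw [hda, hdb, ← part1] at hα
  obtain ⟨w, hwM, rfl⟩ := hα
  have hvw : t * u w - v w = T t := hwM
  have hbound : ∀ x ∈ v '' {w' : Δ | u w' = u w}, x ≤ v w := by
    rintro x ⟨w', hw', rfl⟩
    have := hle t w'
    rw [Set.mem_setOf_eq] at hw'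
    rw [hw'] at this
    linarith
  have hmem : v w ∈ v '' {w' : Δ | u w' = u w} := ⟨w, rfl, rfl⟩
  have hSup : sSup (v '' {w' : Δ | u w' = u w}) = v w :=
    le_antisymm (csSup_le ⟨v w, hmem⟩ hbound) (le_csSup ⟨v w, hbound⟩ hmem)
  have hge : ∀ s : ℝ, v w ≤ s * u w - T s := fun s => by
    have := hle s w; linarith
  have hInf : (⨅ s : ℝ, (s * u w - T s)) = v w := by
    refine le_antisymm ?_ (le_ciInf hge)
    have h1 : (⨅ s : ℝ, (s * u w - T s)) ≤ t * u w - T t :=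
      ciInf_le ⟨v w, Set.forall_mem_range.2 hge⟩ t
    linarith
  rw [hSup, hInf]
end

section
/- Fix a finite index set I, a surjection η : I → J onto a finite set J, numbers a_j ∈ (0,1) for j ∈ J, and b_i ∈ (0, a_{η(i)}) for i ∈ I. For a probability vector w on I, let η(w) be its pushforward to J, H the Shannon entropy, χ₁(w) = ∑_i w_i log(1/a_{η(i)}) and χ₂(w) = ∑_i w_i log(1/b_i). Define ψ_j(t) = log(∑_{i∈η⁻¹(j)} b_i^t)/log(a_j). Then for every t ∈ ℝ, min over probability vectors w of (t·χ₂(w) − [H(w) − H(η(w))])/χ₁(w) equals min_{j∈J} ψ_j(t). -/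
lemma my_logsum {I : Type*} (S : Finset I) (w q : I → ℝ)
    (hw : ∀ i ∈ S, 0 ≤ w i) (hq : ∀ i ∈ S, 0 < q i) (hZ : 0 < ∑ i ∈ S, q i) :
    (∑ i ∈ S, w i) * Real.log (∑ i ∈ S, w i) - (∑ i ∈ S, w i) * Real.log (∑ i ∈ S, q i) ≤
      ∑ i ∈ S, (w i * Real.log (w i) - w i * Real.log (q i)) := by
  set v := ∑ i ∈ S, w i with hv
  set Z := ∑ i ∈ S, q i with hZdef
  have hv0 : 0 ≤ v := Finset.sum_nonneg hw
  rcases hv0.eq_or_lt with h0 | hvpos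
  · have hall : ∀ i ∈ S, w i = 0 := by
      intro i hi
      exact (Finset.sum_eq_zero_iff_of_nonneg hw).mp h0.symm i hi
    rw [← h0]
    have : ∑ i ∈ S, (w i * Real.log (w i) - w i * Real.log (q i)) = 0 :=
      Finset.sum_eq_zero fun i hi => by rw [hall i hi]; ring
    simp [this]
  · have key : ∀ i ∈ S,
        w i * Real.log (q i) + w i * Real.log v - w i * Real.log (w i) - w i * Real.log Z
          ≤ q i * v / Z - w i := by
      intro i hi
      have hqi := hq i hi
      rcases (hw i hi).eq_or_lt with h0 | hwpos
      · rw [← h0]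
        have : (0:ℝ) ≤ q i * v / Z := by positivity
        simpa using this
      · have hx : (0:ℝ) < q i * v / (w i * Z) := by positivity
        have hlog := Real.log_le_sub_one_of_pos hx
        have hexp : Real.log (q i * v / (w i * Z)) =
            Real.log (q i) + Real.log v - Real.log (w i) - Real.log Z := by
          rw [Real.log_div (by positivity) (by positivity),
            Real.log_mul (ne_of_gt (hq i hi)) (ne_of_gt hvpos),
            Real.log_mul (ne_of_gt hwpos) (ne_of_gt hZ)]
          ring
        rw [hexp] at hlog
        have := mul_le_mul_of_nonneg_left hlog (le_of_lt hwpos)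
        calc w i * Real.log (q i) + w i * Real.log v - w i * Real.log (w i) - w i * Real.log Z
            = w i * (Real.log (q i) + Real.log v - Real.log (w i) - Real.log Z) := by ring
          _ ≤ w i * (q i * v / (w i * Z) - 1) := this
          _ = q i * v / Z - w i := by field_simp
    have hsum := Finset.sum_le_sum key
    have hR : ∑ i ∈ S, (q i * v / Z - w i) = 0 := by
      rw [Finset.sum_sub_distrib, ← hv]
      have : ∑ i ∈ S, q i * v / Z = Z * v / Z := by
        rw [← Finset.sum_div, ← Finset.sum_mul, ← hZdef]
      rw [this, mul_comm, mul_div_assoc, div_self (ne_of_gt hZ)]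
      ring
    have hL : ∑ i ∈ S,
        (w i * Real.log (q i) + w i * Real.log v - w i * Real.log (w i) - w i * Real.log Z)
        = (∑ i ∈ S, w i * Real.log (q i)) + v * Real.log v
          - (∑ i ∈ S, w i * Real.log (w i)) - v * Real.log Z := by
      rw [Finset.sum_sub_distrib, Finset.sum_sub_distrib, Finset.sum_add_distrib,
        ← Finset.sum_mul, ← Finset.sum_mul, ← hv]
    rw [hL, hR] at hsum
    rw [Finset.sum_sub_distrib]
    linarith


lemma my_fiber {I J : Type*} [Fintype I] [Fintype J] [DecidableEq J]
    (η : I → J) (f : I → ℝ) :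
    ∑ i, f i = ∑ j, ∑ i ∈ Finset.univ.filter (fun i => η i = j), f i := by
  rw [Finset.sum_fiberwise_eq_sum_filter]
  simp

/-- the constrained entropy minimisation over the simplex equals
the minimum of the column pressures ψ_j(t). -/
theorem stmt11 {I J : Type*} [Fintype I] [Fintype J] [Nonempty I] [Nonempty J] [DecidableEq J]
    (η : I → J) (hη : Function.Surjective η)
    (a : J → ℝ) (ha : ∀ j, a j ∈ Set.Ioo (0:ℝ) 1)
    (b : I → ℝ) (hb : ∀ i, 0 < b i ∧ b i < a (η i)) (t : ℝ) :
    IsLeast ((fun w : I → ℝ =>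
        (t * (∑ i, w i * Real.log (1 / b i)) -
          ((∑ i, Real.negMulLog (w i)) -
            ∑ j, Real.negMulLog (∑ i ∈ Finset.univ.filter (fun i => η i = j), w i))) /
          (∑ i, w i * Real.log (1 / a (η i)))) '' stdSimplex ℝ I)
      (⨅ j : J, Real.log (∑ i ∈ Finset.univ.filter (fun i => η i = j), b i ^ t) /
        Real.log (a j)) := by
  classical
  set F : J → Finset I := fun j => Finset.univ.filter (fun i => η i = j) with hF
  set Z : J → ℝ := fun j => ∑ i ∈ F j, b i ^ t with hZdef
  set ψ : J → ℝ := fun j => Real.log (Z j) / Real.log (a j) with hψdef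
  -- basic positivity facts
  have halog : ∀ j, Real.log (a j) < 0 := fun j => Real.log_neg (ha j).1 (ha j).2
  have hbt : ∀ i, (0:ℝ) < b i ^ t := fun i => Real.rpow_pos_of_pos (hb i).1 t
  have hFne : ∀ j, (F j).Nonempty := by
    intro j
    obtain ⟨i, hi⟩ := hη j
    exact ⟨i, by simp [hF, hi]⟩
  have hZpos : ∀ j, 0 < Z j := fun j =>
    Finset.sum_pos (fun i _ => hbt i) (hFne j)
  -- minimiser of ψ
  obtain ⟨j₀, -, hj₀⟩ := Finset.exists_min_image Finset.univ ψ ⟨Classical.arbitrary J, Finset.mem_univ _⟩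
  have hj₀' : ∀ j, ψ j₀ ≤ ψ j := fun j => hj₀ j (Finset.mem_univ j)
  have hinf : (⨅ j, ψ j) = ψ j₀ :=
    le_antisymm (ciInf_le (Set.Finite.bddBelow (Set.finite_range ψ)) j₀) (le_ciInf hj₀')
  rw [show (⨅ j : J, Real.log (∑ i ∈ Finset.univ.filter (fun i => η i = j), b i ^ t) /
        Real.log (a j)) = ⨅ j, ψ j from rfl, hinf]
  constructor
  · -- membership : the Gibbs measure on the fiber of j₀ attains ψ j₀
    set w : I → ℝ := fun i => if η i = j₀ then b i ^ t / Z j₀ else 0 with hwdef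
    have hw0 : ∀ i, 0 ≤ w i := by
      intro i
      by_cases h : η i = j₀ <;> simp [hwdef, h, le_of_lt (div_pos (hbt i) (hZpos j₀))]
    have hw_expand : ∀ g : I → ℝ,
        ∑ i, w i * g i = ∑ i ∈ F j₀, (b i ^ t / Z j₀) * g i := by
      intro g
      rw [hF, Finset.sum_filter]
      refine Finset.sum_congr rfl fun i _ => ?_
      by_cases h : η i = j₀ <;> simp [hwdef, h]
    have hfsum : ∑ i ∈ F j₀, b i ^ t / Z j₀ = 1 := by
      rw [← Finset.sum_div]
      exact div_self (ne_of_gt (hZpos j₀))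
    have hsumw : ∑ i, w i = 1 := by
      have := hw_expand (fun _ => 1)
      simpa [hfsum] using this
    refine ⟨w, ⟨hw0, hsumw⟩, ?_⟩
    -- compute the value
    have hvj : ∀ j, ∑ i ∈ F j, w i = if j = j₀ then 1 else 0 := by
      intro j
      by_cases h : j = j₀
      · rw [if_pos h]
        calc ∑ i ∈ F j, w i = ∑ i ∈ F j, b i ^ t / Z j₀ := by
              refine Finset.sum_congr rfl fun i hi => ?_
              have hij : η i = j₀ := (Finset.mem_filter.mp hi).2.trans h
              simp [hwdef, hij]
          _ = 1 := by rw [h]; exact hfsum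
      · rw [if_neg h]
        refine Finset.sum_eq_zero fun i hi => ?_
        have hij : η i = j := (Finset.mem_filter.mp hi).2
        simp [hwdef, hij, h]
    have hpush : ∑ j, Real.negMulLog (∑ i ∈ F j, w i) = 0 := by
      refine Finset.sum_eq_zero fun j _ => ?_
      rw [hvj j]
      by_cases h : j = j₀ <;> simp [h]
    set S₁ : ℝ := ∑ i ∈ F j₀, (b i ^ t / Z j₀) * Real.log (b i) with hS₁
    have hchi1 : ∑ i, w i * Real.log (1 / a (η i)) = - Real.log (a j₀) := by
      rw [hw_expand]
      calc ∑ i ∈ F j₀, (b i ^ t / Z j₀) * Real.log (1 / a (η i))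
          = ∑ i ∈ F j₀, (b i ^ t / Z j₀) * (- Real.log (a j₀)) := by
            refine Finset.sum_congr rfl fun i hi => ?_
            have : η i = j₀ := (Finset.mem_filter.mp hi).2
            rw [this, one_div, Real.log_inv]
        _ = (∑ i ∈ F j₀, b i ^ t / Z j₀) * (- Real.log (a j₀)) := by
            rw [Finset.sum_mul]
        _ = - Real.log (a j₀) := by rw [hfsum, one_mul]
    have hchi2 : ∑ i, w i * Real.log (1 / b i) = - S₁ := by
      rw [hw_expand, hS₁, ← Finset.sum_neg_distrib]
      refine Finset.sum_congr rfl fun i _ => ?_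
      rw [one_div, Real.log_inv]
      ring
    have hH : ∑ i, Real.negMulLog (w i) = -(t * S₁) + Real.log (Z j₀) := by
      have h1 : ∑ i, Real.negMulLog (w i) = ∑ i ∈ F j₀, Real.negMulLog (b i ^ t / Z j₀) := by
        rw [hF, Finset.sum_filter]
        refine Finset.sum_congr rfl fun i _ => ?_
        by_cases h : η i = j₀ <;> simp [hwdef, h]
      rw [h1]
      have h2 : ∀ i ∈ F j₀, Real.negMulLog (b i ^ t / Z j₀) =
          (b i ^ t / Z j₀) * Real.log (Z j₀) - t * ((b i ^ t / Z j₀) * Real.log (b i)) := by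
        intro i _
        rw [Real.negMulLog, Real.log_div (ne_of_gt (hbt i)) (ne_of_gt (hZpos j₀)),
          Real.log_rpow (hb i).1]
        ring
      rw [Finset.sum_congr rfl h2, Finset.sum_sub_distrib, ← Finset.sum_mul, ← Finset.mul_sum,
        hfsum, one_mul, ← hS₁]
      ring
    show (t * (∑ i, w i * Real.log (1 / b i)) -
          ((∑ i, Real.negMulLog (w i)) -
            ∑ j, Real.negMulLog (∑ i ∈ F j, w i))) /
          (∑ i, w i * Real.log (1 / a (η i))) = ψ j₀
    rw [hchi1, hchi2, hH, hpush, hψdef]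
    have : t * -S₁ - (-(t * S₁) + Real.log (Z j₀) - 0) = - Real.log (Z j₀) := by ring
    rw [this, neg_div_neg_eq]
  · -- lower bound
    rintro x ⟨w, hw, rfl⟩
    obtain ⟨hw0, hw1⟩ := hw
    have hla : ∀ j, 0 < Real.log (1 / a j) := by
      intro j
      rw [one_div, Real.log_inv]
      linarith [halog j]
    have hDpos : 0 < ∑ i, w i * Real.log (1 / a (η i)) := by
      have hex : ∃ i, 0 < w i := by
        by_contra h
        push_neg at h
        have : ∀ i ∈ Finset.univ, w i = 0 := fun i _ => le_antisymm (h i) (hw0 i)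
        rw [Finset.sum_congr rfl this] at hw1
        simpa using hw1
      obtain ⟨i₀, hi₀⟩ := hex
      refine Finset.sum_pos' (fun i _ => mul_nonneg (hw0 i) (le_of_lt (hla (η i))))
        ⟨i₀, Finset.mem_univ i₀, mul_pos hi₀ (hla (η i₀))⟩
    show ψ j₀ ≤ (t * (∑ i, w i * Real.log (1 / b i)) -
          ((∑ i, Real.negMulLog (w i)) -
            ∑ j, Real.negMulLog (∑ i ∈ F j, w i))) /
          (∑ i, w i * Real.log (1 / a (η i)))
    rw [le_div_iff₀ hDpos]
    -- fiberwise decomposition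
    have hgoal : t * (∑ i, w i * Real.log (1 / b i)) - (∑ i, Real.negMulLog (w i)) +
        (∑ j, Real.negMulLog (∑ i ∈ F j, w i)) =
        ∑ j, ((∑ i ∈ F j, (t * (w i * Real.log (1 / b i)) + w i * Real.log (w i))) +
          Real.negMulLog (∑ i ∈ F j, w i)) := by
      rw [Finset.sum_add_distrib]
      congr 1
      rw [← my_fiber η, Finset.mul_sum, ← Finset.sum_sub_distrib]
      refine Finset.sum_congr rfl fun i _ => ?_
      rw [Real.negMulLog]
      ring
    have hD : ψ j₀ * (∑ i, w i * Real.log (1 / a (η i))) =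
        ∑ j, ψ j₀ * ((∑ i ∈ F j, w i) * Real.log (1 / a j)) := by
      rw [← Finset.mul_sum]
      congr 1
      rw [my_fiber η (fun i => w i * Real.log (1 / a (η i)))]
      refine Finset.sum_congr rfl fun j _ => ?_
      rw [Finset.sum_mul]
      refine Finset.sum_congr rfl fun i hi => ?_
      rw [(Finset.mem_filter.mp hi).2]
    have key : ∀ j ∈ Finset.univ, ψ j₀ * ((∑ i ∈ F j, w i) * Real.log (1 / a j)) ≤
        (∑ i ∈ F j, (t * (w i * Real.log (1 / b i)) + w i * Real.log (w i))) +
          Real.negMulLog (∑ i ∈ F j, w i) := by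
      intro j _
      set v : ℝ := ∑ i ∈ F j, w i with hv
      have hv0 : 0 ≤ v := Finset.sum_nonneg fun i _ => hw0 i
      have hls : v * Real.log v - v * Real.log (Z j) ≤
          ∑ i ∈ F j, (w i * Real.log (w i) - w i * Real.log (b i ^ t)) :=
        my_logsum (F j) w (fun i => b i ^ t) (fun i _ => hw0 i)
          (fun i _ => hbt i) (hZpos j)
      have h2 : ∑ i ∈ F j, (t * (w i * Real.log (1 / b i)) + w i * Real.log (w i)) =
          ∑ i ∈ F j, (w i * Real.log (w i) - w i * Real.log (b i ^ t)) := by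
        refine Finset.sum_congr rfl fun i _ => ?_
        rw [Real.log_rpow (hb i).1, one_div, Real.log_inv]
        ring
      have e1 : ψ j₀ * (- Real.log (a j)) ≤ - Real.log (Z j) := by
        have h := hj₀' j
        have h3 := mul_le_mul_of_nonneg_right h (neg_nonneg.mpr (le_of_lt (halog j)))
        calc ψ j₀ * (- Real.log (a j)) ≤ ψ j * (- Real.log (a j)) := h3
          _ = - Real.log (Z j) := by
            rw [hψdef, mul_neg, div_mul_cancel₀ _ (ne_of_lt (halog j))]
      have e2 : ψ j₀ * (v * Real.log (1 / a j)) ≤ v * (- Real.log (Z j)) := by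
        rw [one_div, Real.log_inv]
        calc ψ j₀ * (v * (- Real.log (a j))) = v * (ψ j₀ * (- Real.log (a j))) := by ring
          _ ≤ v * (- Real.log (Z j)) := mul_le_mul_of_nonneg_left e1 hv0
      rw [h2, Real.negMulLog]
      linarith [hls, e2]
    calc ψ j₀ * (∑ i, w i * Real.log (1 / a (η i)))
        = ∑ j, ψ j₀ * ((∑ i ∈ F j, w i) * Real.log (1 / a j)) := hD
      _ ≤ ∑ j, ((∑ i ∈ F j, (t * (w i * Real.log (1 / b i)) + w i * Real.log (w i))) +
          Real.negMulLog (∑ i ∈ F j, w i)) := Finset.sum_le_sum key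
      _ = t * (∑ i, w i * Real.log (1 / b i)) - (∑ i, Real.negMulLog (w i)) +
          (∑ j, Real.negMulLog (∑ i ∈ F j, w i)) := hgoal.symm
      _ = t * (∑ i, w i * Real.log (1 / b i)) -
          ((∑ i, Real.negMulLog (w i)) -
            ∑ j, Real.negMulLog (∑ i ∈ F j, w i)) := by ring
end

section
/- With the setup of a finite index set I, surjection η : I → J, a_j ∈ (0,1), b_i ∈ (0, a_{η(i)}), and for t ∈ ℝ and a probability vector p on J define z(t,p) to be the probability vector on I with z(t,p)_i = p_{η(i)} · a_{η(i)}^{−ψ_{η(i)}(t)} · b_i^t, where ψ_j(t) = log(∑_{i∈η⁻¹(j)} b_i^t)/log a_j. Then z(t,p) is indeed a probability vector, and for any probability vector w on I with η(w) = p, one has D(w ‖ z(t,p)) = −H(w) + H(η(w)) + ∑_{j∈J} p_j ψ_j(t) log a_j + t·χ₂(w), where D is the Kullback–Leibler divergence, H the Shannon entropy, and χ₂(w) = ∑_i w_i log(1/b_i). -/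
/-- z(t,p) is a probability vector and the KL-divergence identity. -/
theorem stmt12 {I J : Type*} [Fintype I] [Fintype J] [Nonempty I] [Nonempty J] [DecidableEq J]
    (η : I → J) (hη : Function.Surjective η)
    (a : J → ℝ) (ha : ∀ j, a j ∈ Set.Ioo (0:ℝ) 1)
    (b : I → ℝ) (hb : ∀ i, 0 < b i ∧ b i < a (η i))
    (t : ℝ) (p : J → ℝ) (hp : p ∈ stdSimplex ℝ J) (hppos : ∀ j, 0 < p j)
    (ψ : J → ℝ → ℝ)
    (hψ : ∀ j s, ψ j s =
      Real.log (∑ i ∈ Finset.univ.filter (fun i => η i = j), b i ^ s) / Real.log (a j))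
    (z : I → ℝ) (hz : ∀ i, z i = p (η i) * a (η i) ^ (-(ψ (η i) t)) * b i ^ t) :
    z ∈ stdSimplex ℝ I ∧
    ∀ w ∈ stdSimplex ℝ I,
      (∀ j, (∑ i ∈ Finset.univ.filter (fun i => η i = j), w i) = p j) →
      (∑ i, w i * Real.log (w i / z i)) =
        -(∑ i, Real.negMulLog (w i)) + (∑ j, Real.negMulLog (p j)) +
          (∑ j, p j * ψ j t * Real.log (a j)) +
          t * (∑ i, w i * Real.log (1 / b i)) := by
  have hbpos : ∀ i, 0 < b i := fun i => (hb i).1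
  set S : J → ℝ := fun j => ∑ i ∈ Finset.univ.filter (fun i => η i = j), b i ^ t with hS
  have hSpos : ∀ j, 0 < S j := by
    intro j
    obtain ⟨i, hi⟩ := hη j
    apply Finset.sum_pos
    · intro k _; exact Real.rpow_pos_of_pos (hbpos k) t
    · exact ⟨i, Finset.mem_filter.mpr ⟨Finset.mem_univ i, hi⟩⟩
  have hla : ∀ j, Real.log (a j) ≠ 0 := by
    intro j
    exact ne_of_lt (Real.log_neg (ha j).1 (ha j).2)
  have hA : ∀ j, a j ^ (-(ψ j t)) = (S j)⁻¹ := by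
    intro j
    rw [Real.rpow_def_of_pos (ha j).1, hψ, mul_comm, neg_mul, div_mul_cancel₀ _ (hla j)]
    show Real.exp (-Real.log (S j)) = (S j)⁻¹
    rw [Real.exp_neg, Real.exp_log (hSpos j)]
  have hzpos : ∀ i, 0 < z i := by
    intro i
    rw [hz i]
    exact mul_pos (mul_pos (hppos _) (Real.rpow_pos_of_pos (ha _).1 _))
      (Real.rpow_pos_of_pos (hbpos i) t)
  have hsumz : ∑ i, z i = 1 := by
    rw [← Finset.sum_fiberwise Finset.univ η z]
    have : ∀ j, ∑ i ∈ Finset.univ.filter (fun i => η i = j), z i = p j := by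
      intro j
      have : ∀ i ∈ Finset.univ.filter (fun i => η i = j),
          z i = p j * (S j)⁻¹ * b i ^ t := by
        intro i hi
        have hij : η i = j := (Finset.mem_filter.mp hi).2
        rw [hz i, hij, hA j]
      rw [Finset.sum_congr rfl this, ← Finset.mul_sum]
      show p j * (S j)⁻¹ * S j = p j
      rw [mul_assoc, inv_mul_cancel₀ (ne_of_gt (hSpos j)), mul_one]
    rw [Finset.sum_congr rfl (fun j _ => this j)]
    exact hp.2
  refine ⟨⟨fun i => le_of_lt (hzpos i), hsumz⟩, ?_⟩
  intro w hw hwp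
  have key : ∀ i, w i * Real.log (w i / z i) =
      w i * Real.log (w i) - w i * Real.log (p (η i))
        + (w i * ψ (η i) t) * Real.log (a (η i)) - t * (w i * Real.log (b i)) := by
    intro i
    rcases eq_or_lt_of_le (hw.1 i) with h0 | h0
    · rw [← h0]; ring
    · have hzne := ne_of_gt (hzpos i)
      rw [Real.log_div (ne_of_gt h0) hzne, hz i,
        Real.log_mul (ne_of_gt (mul_pos (hppos _) (Real.rpow_pos_of_pos (ha _).1 _))) (ne_of_gt (Real.rpow_pos_of_pos (hbpos i) t)),
        Real.log_mul (ne_of_gt (hppos _)) (ne_of_gt (Real.rpow_pos_of_pos (ha _).1 _)),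
        Real.log_rpow (ha _).1, Real.log_rpow (hbpos i)]
      ring
  rw [Finset.sum_congr rfl (fun i _ => key i)]
  have hfib : ∀ (c : J → ℝ), ∑ i, w i * c (η i) = ∑ j, p j * c j := by
    intro c
    rw [← Finset.sum_fiberwise Finset.univ η (fun i => w i * c (η i))]
    refine Finset.sum_congr rfl fun j _ => ?_
    have : ∀ i ∈ Finset.univ.filter (fun i => η i = j),
        w i * c (η i) = w i * c j := by
      intro i hi; rw [(Finset.mem_filter.mp hi).2]
    rw [Finset.sum_congr rfl this, ← Finset.sum_mul, hwp j]
  have h1 : ∑ i, w i * Real.log (p (η i)) = ∑ j, p j * Real.log (p j) :=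
    hfib (fun j => Real.log (p j))
  have h2 : ∑ i, (w i * ψ (η i) t) * Real.log (a (η i))
      = ∑ j, p j * ψ j t * Real.log (a j) := by
    have := hfib (fun j => ψ j t * Real.log (a j))
    simp only [← mul_assoc] at this
    exact this
  have h3 : ∀ i, w i * Real.log (1 / b i) = -(w i * Real.log (b i)) := by
    intro i
    rw [one_div, Real.log_inv]; ring
  simp only [Finset.sum_sub_distrib, Finset.sum_add_distrib, h1, h2,
    Real.negMulLog, Finset.sum_congr rfl (fun i _ => h3 i),
    ← Finset.mul_sum, Finset.sum_neg_distrib, neg_mul]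
  ring
end

section
/- With I, η : I → J, a_j ∈ (0,1), b_i ∈ (0, a_{η(i)}) as above, let s_j be the unique solution of ∑_{i∈η⁻¹(j)} b_i^{s_j} = 1 and t_max = max_{j∈J} s_j. Then the maximum over probability vectors w on I of (H(w) − H(η(w)))/χ₂(w) equals t_max, where H is Shannon entropy, η(w) is the pushforward and χ₂(w) = ∑_i w_i log(1/b_i). -/
open Real Finset

/-- Gibbs' inequality. -/
lemma gibbs_aux {I : Type*} [Fintype I] (w q : I → ℝ)
    (hw0 : ∀ i, 0 ≤ w i) (hq0 : ∀ i, 0 ≤ q i)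
    (hw1 : ∑ i, w i = 1) (hq1 : ∑ i, q i ≤ 1)
    (hpos : ∀ i, 0 < w i → 0 < q i) :
    ∑ i, Real.negMulLog (w i) ≤ ∑ i, -(w i * Real.log (q i)) := by
  have key : ∀ i, Real.negMulLog (w i) ≤ -(w i * Real.log (q i)) + (q i - w i) := by
    intro i
    rcases eq_or_lt_of_le (hw0 i) with h | h
    · simp [← h, Real.negMulLog, hq0 i]
    · have hq := hpos i h
      have hlog : Real.log (q i) - Real.log (w i) ≤ q i / w i - 1 := by
        have := Real.log_le_sub_one_of_pos (show 0 < q i / w i by positivity)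
        rwa [Real.log_div (ne_of_gt hq) (ne_of_gt h)] at this
      have hm := mul_le_mul_of_nonneg_left hlog h.le
      have hcan : w i * (q i / w i) = q i := by
        field_simp
      rw [mul_sub, mul_sub, hcan, mul_one] at hm
      simp only [Real.negMulLog]
      nlinarith [hm]
  calc ∑ i, Real.negMulLog (w i)
      ≤ ∑ i, (-(w i * Real.log (q i)) + (q i - w i)) := Finset.sum_le_sum fun i _ => key i
    _ = (∑ i, -(w i * Real.log (q i))) + ((∑ i, q i) - ∑ i, w i) := by
        rw [Finset.sum_add_distrib, Finset.sum_sub_distrib]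
    _ ≤ ∑ i, -(w i * Real.log (q i)) := by rw [hw1]; linarith

/-- the maximum of (H(w) - H(η(w)))/χ₂(w) over the simplex is
t_max = max_j s_j. -/
theorem stmt13 {I J : Type*} [Fintype I] [Fintype J] [Nonempty I] [Nonempty J] [DecidableEq J]
    (η : I → J) (hη : Function.Surjective η)
    (a : J → ℝ) (ha : ∀ j, a j ∈ Set.Ioo (0:ℝ) 1)
    (b : I → ℝ) (hb : ∀ i, 0 < b i ∧ b i < a (η i))
    (s : J → ℝ)
    (hs : ∀ j, (∑ i ∈ Finset.univ.filter (fun i => η i = j), b i ^ (s j)) = 1) :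
    IsGreatest ((fun w : I → ℝ =>
        ((∑ i, Real.negMulLog (w i)) -
          ∑ j, Real.negMulLog (∑ i ∈ Finset.univ.filter (fun i => η i = j), w i)) /
          (∑ i, w i * Real.log (1 / b i))) '' stdSimplex ℝ I)
      (⨆ j : J, s j) := by
  have hb0 : ∀ i, 0 < b i := fun i => (hb i).1
  have hb1 : ∀ i, b i < 1 := fun i => (hb i).2.trans (ha (η i)).2
  have hL : ∀ i, 0 < Real.log (1 / b i) := by
    intro i
    rw [one_div]
    exact Real.log_pos ((one_lt_inv₀ (hb0 i)).2 (hb1 i))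
  have hsle : ∀ j, s j ≤ ⨆ j, s j := fun j =>
    le_ciSup (Set.Finite.bddAbove (Set.finite_range s)) j
  obtain ⟨j₀, hj₀⟩ := Finite.exists_max s
  have htj₀ : (⨆ j, s j) = s j₀ := le_antisymm (ciSup_le hj₀) (hsle j₀)
  constructor
  · -- membership: attained at w i = if η i = j₀ then b i ^ s j₀ else 0
    set w : I → ℝ := fun i => if η i = j₀ then b i ^ (s j₀) else 0 with hwdef
    have hwsum : ∑ i, w i = 1 := by
      rw [hwdef]
      rw [← Finset.sum_filter]
      exact hs j₀
    refine ⟨w, ⟨fun i => ?_, hwsum⟩, ?_⟩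
    · by_cases h : η i = j₀ <;> simp [hwdef, h, (Real.rpow_pos_of_pos (hb0 i) _).le]
    · -- compute the value
      have hp : ∀ j, (∑ i ∈ Finset.univ.filter (fun i => η i = j), w i)
          = if j = j₀ then 1 else 0 := by
        intro j
        by_cases h : j = j₀
        · subst h
          simp only [if_true]
          rw [← hs j]
          refine Finset.sum_congr rfl fun i hi => ?_
          rw [Finset.mem_filter] at hi
          simp [hwdef, hi.2]
        · simp only [h, if_false]
          refine Finset.sum_eq_zero fun i hi => ?_
          rw [Finset.mem_filter] at hi
          simp [hwdef, hi.2, h]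
      have hH2 : ∑ j, Real.negMulLog (∑ i ∈ Finset.univ.filter (fun i => η i = j), w i)
          = 0 := by
        refine Finset.sum_eq_zero fun j _ => ?_
        rw [hp j]
        by_cases h : j = j₀ <;> simp [h, Real.negMulLog]
      have hterm : ∀ i, Real.negMulLog (w i) = s j₀ * (w i * Real.log (1 / b i)) := by
        intro i
        by_cases h : η i = j₀
        · simp only [hwdef, h, if_true]
          rw [Real.negMulLog, Real.log_rpow (hb0 i), one_div, Real.log_inv]
          ring
        · simp [hwdef, h, Real.negMulLog]
      have hH1 : ∑ i, Real.negMulLog (w i) = s j₀ * ∑ i, w i * Real.log (1 / b i) := by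
        rw [Finset.mul_sum]
        exact Finset.sum_congr rfl fun i _ => hterm i
      have hC : 0 < ∑ i, w i * Real.log (1 / b i) := by
        obtain ⟨i₀, hi₀⟩ := hη j₀
        refine Finset.sum_pos' (fun i _ => ?_) ⟨i₀, Finset.mem_univ _, ?_⟩
        · by_cases h : η i = j₀
          · exact mul_nonneg (by simp [hwdef, h, (Real.rpow_pos_of_pos (hb0 i) _).le])
              (hL i).le
          · simp [hwdef, h]
        · have : w i₀ = b i₀ ^ (s j₀) := by simp [hwdef, hi₀]
          rw [this]
          exact mul_pos (Real.rpow_pos_of_pos (hb0 i₀) _) (hL i₀)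
      simp only [hH1, hH2, sub_zero]
      rw [mul_div_assoc, div_self (ne_of_gt hC), mul_one, htj₀]
  · -- upper bound
    rintro x ⟨w, hw, rfl⟩
    obtain ⟨hw0, hw1⟩ := hw
    set p : J → ℝ := fun j => ∑ i ∈ Finset.univ.filter (fun i => η i = j), w i with hpdef
    have hp0 : ∀ j, 0 ≤ p j := fun j => Finset.sum_nonneg fun i _ => hw0 i
    have hple : ∀ i, w i ≤ p (η i) := by
      intro i
      exact Finset.single_le_sum (fun i' _ => hw0 i')
        (Finset.mem_filter.2 ⟨Finset.mem_univ _, rfl⟩)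
    set q : I → ℝ := fun i => p (η i) * b i ^ (s (η i)) with hqdef
    have hq0 : ∀ i, 0 ≤ q i := fun i =>
      mul_nonneg (hp0 _) (Real.rpow_pos_of_pos (hb0 i) _).le
    have hqsum : ∑ i, q i = 1 := by
      rw [← Finset.sum_fiberwise Finset.univ η q]
      have : ∀ j, (∑ i ∈ Finset.univ.filter (fun i => η i = j), q i) = p j := by
        intro j
        have : (∑ i ∈ Finset.univ.filter (fun i => η i = j), q i)
            = p j * ∑ i ∈ Finset.univ.filter (fun i => η i = j), b i ^ (s j) := by
          rw [Finset.mul_sum]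
          refine Finset.sum_congr rfl fun i hi => ?_
          rw [Finset.mem_filter] at hi
          simp [hqdef, hi.2]
        rw [this, hs j, mul_one]
      rw [Finset.sum_congr rfl fun j _ => this j]
      rw [hpdef]
      rw [Finset.sum_fiberwise Finset.univ η w]
      exact hw1
    have hpos : ∀ i, 0 < w i → 0 < q i := by
      intro i hi
      exact mul_pos (lt_of_lt_of_le hi (hple i)) (Real.rpow_pos_of_pos (hb0 i) _)
    have hgibbs := gibbs_aux w q hw0 hq0 hw1 (le_of_eq hqsum) hpos
    have hsplit : ∀ i, -(w i * Real.log (q i))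
        = -(w i * Real.log (p (η i))) + w i * (s (η i)) * Real.log (1 / b i) := by
      intro i
      rcases eq_or_lt_of_le (hw0 i) with h | h
      · simp [← h]
      · have hpp : 0 < p (η i) := lt_of_lt_of_le h (hple i)
        have : Real.log (q i) = Real.log (p (η i)) + s (η i) * Real.log (b i) := by
          rw [hqdef]
          simp only
          rw [Real.log_mul (ne_of_gt hpp) (ne_of_gt (Real.rpow_pos_of_pos (hb0 i) _)),
            Real.log_rpow (hb0 i)]
        rw [this, one_div, Real.log_inv]
        ring
    have hfib : ∑ i, -(w i * Real.log (p (η i))) = ∑ j, Real.negMulLog (p j) := by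
      rw [← Finset.sum_fiberwise Finset.univ η (fun i => -(w i * Real.log (p (η i))))]
      refine Finset.sum_congr rfl fun j _ => ?_
      have : (∑ i ∈ Finset.univ.filter (fun i => η i = j), -(w i * Real.log (p (η i))))
          = -((∑ i ∈ Finset.univ.filter (fun i => η i = j), w i) * Real.log (p j)) := by
        rw [Finset.sum_mul, ← Finset.sum_neg_distrib]
        refine Finset.sum_congr rfl fun i hi => ?_
        rw [Finset.mem_filter] at hi
        rw [hi.2]
      rw [this, Real.negMulLog, hpdef, neg_mul]
    have hupper : ∑ i, w i * (s (η i)) * Real.log (1 / b i)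
        ≤ (⨆ j, s j) * ∑ i, w i * Real.log (1 / b i) := by
      rw [Finset.mul_sum]
      refine Finset.sum_le_sum fun i _ => ?_
      have : w i * s (η i) * Real.log (1 / b i) = s (η i) * (w i * Real.log (1 / b i)) := by
        ring
      rw [this]
      exact mul_le_mul_of_nonneg_right (hsle (η i))
        (mul_nonneg (hw0 i) (hL i).le)
    have hC : 0 < ∑ i, w i * Real.log (1 / b i) := by
      have hex : ∃ i, 0 < w i := by
        by_contra hcon
        push_neg at hcon
        have : ∀ i ∈ Finset.univ, w i = 0 := fun i _ =>
          le_antisymm (hcon i) (hw0 i)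
        rw [Finset.sum_congr rfl this] at hw1
        simp at hw1
      obtain ⟨i₀, hi₀⟩ := hex
      refine Finset.sum_pos' (fun i _ => mul_nonneg (hw0 i) (hL i).le)
        ⟨i₀, Finset.mem_univ _, mul_pos hi₀ (hL i₀)⟩
    rw [div_le_iff₀ hC]
    have : ∑ i, -(w i * Real.log (q i))
        = (∑ j, Real.negMulLog (p j)) + ∑ i, w i * (s (η i)) * Real.log (1 / b i) := by
      rw [Finset.sum_congr rfl fun i _ => hsplit i, Finset.sum_add_distrib, hfib]
    rw [this] at hgibbs
    rw [hpdef] at hgibbs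
    linarith
end
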